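/- arXiv:1210.4230 — 6 statements merged into one kernel-verified Lean document; each statement's English description precedes it below -/
import Mathlib

section
/- In an (s,t)-switchable set S, s-equivalence implies connectedness: if a, b ∈ S are s-equivalent, then there exists a path a = c_0, c_1, …, c_k = b with all c_j ∈ S and d(c_{j-1}, c_j) = 1 for each j. -/
open Finset

/-- The set of indices: `a i` (a value in `Fin (r i)`) represents the entry `a_i = (a i) + 1`
of an index in `[r 1] × ⋯ × [r n]`.  So `0` corresponds to the entry `1` and `r i - 1`
to the entry `r i`. -/
abbrev Idx (n : ℕ) (r : Fin n → ℕ) := ∀ i : Fin n, Fin (r i)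

/-- `a` and `b` are `s`-equivalent: equal sums of the first `s` components and equal
remaining components. -/
def sEquiv (n s : ℕ) (r : Fin n → ℕ) (a b : Idx n r) : Prop :=
  (∑ i ∈ Finset.univ.filter (fun i : Fin n => (i : ℕ) < s), (a i : ℕ)) =
    (∑ i ∈ Finset.univ.filter (fun i : Fin n => (i : ℕ) < s), (b i : ℕ)) ∧
  ∀ i : Fin n, s ≤ (i : ℕ) → a i = b i

/-- The switch of `a` and `b` with respect to a single component `i`. -/
def sw {n : ℕ} {r : Fin n → ℕ} (i : Fin n) (a b : Idx n r) : Idx n r :=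
  fun j => if j = i then b j else a j

/-- The switch of `a` and `b` with respect to a set `L` of components. -/
def swL {n : ℕ} {r : Fin n → ℕ} (L : Finset (Fin n)) (a b : Idx n r) : Idx n r :=
  fun j => if j ∈ L then b j else a j

/-- An `(s,t)`-switchable subset of the set of indices. -/
def Switchable (n s t : ℕ) (r : Fin n → ℕ) (S : Set (Idx n r)) : Prop :=
  (∀ a b, a ∈ S → b ∈ S → hammingDist a b = 2 →
    ∀ i : Fin n, (i : ℕ) < t → sw i a b ∈ S) ∧
  (∀ a b, a ∈ S → sEquiv n s r a b → b ∈ S)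

/-- `c 0, c 1, …, c k` is a path in `S`: all members lie in `S` and consecutive members
have Hamming distance `1`. -/
def IsPathIn {n : ℕ} {r : Fin n → ℕ} (S : Set (Idx n r)) (c : ℕ → Idx n r) (k : ℕ) : Prop :=
  (∀ j ≤ k, c j ∈ S) ∧ ∀ j < k, hammingDist (c j) (c (j + 1)) = 1

/-- `a` and `b` are connected in `S`. -/
def ConnectedIn {n : ℕ} {r : Fin n → ℕ} (S : Set (Idx n r)) (a b : Idx n r) : Prop :=
  ∃ k c, c 0 = a ∧ c k = b ∧ IsPathIn S c k

/-!
Fix a pivot coordinate `z` with `z < s` and `z < t`. Moving one unit between `z` and another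
coordinate `i < s` keeps a point in its `s`-class, hence in `S`; the old and new points differ in
exactly the coordinates `z` and `i`, so switching at `z` gives a point of `S` adjacent to both.
Since `r z ≥ 2`, the pivot can always absorb or release a unit in a direction that brings some
coordinate `i` closer to `b`, and repeating such moves reaches `b`.
-/

open Function

section ConnectedIn

variable {n : ℕ} {r : Fin n → ℕ} {S : Set (Idx n r)} {a b c : Idx n r}

theorem ConnectedIn.refl (ha : a ∈ S) : ConnectedIn S a a :=
  ⟨0, fun _ => a, rfl, rfl, fun _ _ => ha, fun _ h => absurd h (Nat.not_lt_zero _)⟩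

theorem ConnectedIn.mem_right (h : ConnectedIn S a b) : b ∈ S := by
  obtain ⟨k, p, -, hk, hmem, -⟩ := h
  exact hk ▸ hmem k le_rfl

theorem ConnectedIn.snoc (h : ConnectedIn S a b) (hc : c ∈ S) (hbc : hammingDist b c = 1) :
    ConnectedIn S a c := by
  obtain ⟨k, p, h0, hk, hmem, hstep⟩ := h
  refine ⟨k + 1, fun j => if j ≤ k then p j else c, by simpa using h0, by simp, ?_, ?_⟩
  · intro j _
    dsimp only
    split_ifs with hj
    exacts [hmem j hj, hc]
  · intro j hj
    rcases (Nat.lt_succ_iff.1 hj).lt_or_eq with hj | rfl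
    · simpa [hj.le, Nat.succ_le_of_lt hj] using hstep j hj
    · simpa [hk] using hbc

end ConnectedIn

theorem hammingDist_eq_card_of_forall_ne_iff {ι : Type*} [Fintype ι] [DecidableEq ι]
    {β : ι → Type*} [∀ i, DecidableEq (β i)] {x y : ∀ i, β i} {L : Finset ι}
    (h : ∀ j, x j ≠ y j ↔ j ∈ L) : hammingDist x y = L.card := by
  unfold hammingDist
  congr 1
  ext j
  simp [h]

theorem Finset.sum_eq_sum_of_add_eq_add {ι M : Type*} [AddCommMonoid M] [DecidableEq ι]
    {T : Finset ι} {f g : ι → M} {z i : ι} (hz : z ∈ T) (hi : i ∈ T) (hzi : z ≠ i)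
    (h : f z + f i = g z + g i) (hrest : ∀ j ∈ T, j ≠ z → j ≠ i → f j = g j) :
    ∑ j ∈ T, f j = ∑ j ∈ T, g j := by
  have hsub : {z, i} ⊆ T := insert_subset hz (singleton_subset_iff.2 hi)
  rw [← sum_sdiff hsub, ← sum_sdiff (f := g) hsub, sum_pair hzi, sum_pair hzi, h]
  congr 1
  refine sum_congr rfl fun j hj => ?_
  simp only [mem_sdiff, mem_insert, mem_singleton, not_or] at hj
  exact hrest j hj.1 hj.2.1 hj.2.2

/-- `p` and `q` are the pivot values of the current point and of the target, `m` is the range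
of the pivot. -/
theorem exists_unit_transfer {ι : Type*} {F : Finset ι} {f g : ι → ℕ} {p q m : ℕ}
    (hq : q < m) (hm : 2 ≤ m) (hsum : p + ∑ i ∈ F, f i = q + ∑ i ∈ F, g i)
    (hne : ∃ i ∈ F, f i ≠ g i) :
    ∃ i ∈ F, (f i < g i ∧ 0 < p) ∨ (g i < f i ∧ p + 1 < m) := by
  rcases lt_trichotomy p q with hpq | rfl | hpq
  · obtain ⟨i, hi, h⟩ := exists_lt_of_sum_lt (show ∑ i ∈ F, g i < ∑ i ∈ F, f i by omega)
    exact ⟨i, hi, .inr ⟨h, by omega⟩⟩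
  · have hFsum : ∑ i ∈ F, f i = ∑ i ∈ F, g i := by omega
    obtain ⟨i, hi, hfg⟩ := hne
    rcases Nat.eq_zero_or_pos p with hp | hp
    · obtain ⟨j, hj, h⟩ : ∃ j ∈ F, g j < f j := by
        by_contra! hle
        exact hfg ((sum_eq_sum_iff_of_le hle).1 hFsum i hi)
      exact ⟨j, hj, .inr ⟨h, by omega⟩⟩
    · obtain ⟨j, hj, h⟩ : ∃ j ∈ F, f j < g j := by
        by_contra! hle
        exact hfg ((sum_eq_sum_iff_of_le hle).1 hFsum.symm i hi).symm
      exact ⟨j, hj, .inl ⟨h, hp⟩⟩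
  · obtain ⟨i, hi, h⟩ := exists_lt_of_sum_lt (show ∑ i ∈ F, f i < ∑ i ∈ F, g i by omega)
    exact ⟨i, hi, .inl ⟨h, by omega⟩⟩

theorem Fin.exists_unit_transfer {m k : ℕ} {p : Fin m} {u v : Fin k}
    (h : (u < v ∧ 0 < (p : ℕ)) ∨ (v < u ∧ (p : ℕ) + 1 < m)) :
    ∃ (p' : Fin m) (u' : Fin k), (p' : ℕ) + u' = p + u ∧ p' ≠ p ∧
      Nat.dist u' v < Nat.dist u v := by
  rcases h with ⟨huv, hp⟩ | ⟨hvu, hp⟩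
  · refine ⟨⟨p - 1, by omega⟩, ⟨u + 1, by omega⟩, by simp; omega, by simp [Fin.ext_iff]; omega,
      by simp only [Nat.dist]; omega⟩
  · refine ⟨⟨p + 1, hp⟩, ⟨u - 1, by omega⟩, by simp; omega, by simp [Fin.ext_iff],
      by simp only [Nat.dist]; omega⟩

section Switching

variable {n s t : ℕ} {r : Fin n → ℕ} {S : Set (Idx n r)}

def lowCoords (n s : ℕ) : Finset (Fin n) := univ.filter fun i : Fin n => (i : ℕ) < s

theorem mem_lowCoords {i : Fin n} : i ∈ lowCoords n s ↔ (i : ℕ) < s := by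
  simp [lowCoords]

theorem sEquiv.symm {a b : Idx n r} (h : sEquiv n s r a b) : sEquiv n s r b a :=
  ⟨h.1.symm, fun i hi => (h.2 i hi).symm⟩

theorem sEquiv.trans {a b c : Idx n r} (h : sEquiv n s r a b) (h' : sEquiv n s r b c) :
    sEquiv n s r a c :=
  ⟨h.1.trans h'.1, fun i hi => (h.2 i hi).trans (h'.2 i hi)⟩

theorem sEquiv.add_sum_erase {a b : Idx n r} (h : sEquiv n s r a b) {z : Fin n}
    (hz : (z : ℕ) < s) :
    (a z : ℕ) + ∑ i ∈ (lowCoords n s).erase z, (a i : ℕ) =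
      b z + ∑ i ∈ (lowCoords n s).erase z, (b i : ℕ) := by
  rw [Finset.add_sum_erase _ (fun i => (a i : ℕ)) (mem_lowCoords.2 hz),
    Finset.add_sum_erase _ (fun i => (b i : ℕ)) (mem_lowCoords.2 hz)]
  exact h.1

theorem sEquiv.eq_of_forall_mem_erase {a b : Idx n r} (h : sEquiv n s r a b) {z : Fin n}
    (hz : (z : ℕ) < s) (hrest : ∀ i ∈ (lowCoords n s).erase z, a i = b i) : a = b := by
  have hz' : a z = b z := by
    have := h.add_sum_erase hz
    rw [sum_congr rfl fun i hi => congrArg Fin.val (hrest i hi)] at this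
    exact Fin.ext (by omega)
  funext i
  by_cases hiz : i = z
  · exact hiz ▸ hz'
  by_cases his : (i : ℕ) < s
  · exact hrest i (mem_erase.2 ⟨hiz, mem_lowCoords.2 his⟩)
  · exact h.2 i (not_lt.1 his)

theorem sEquiv_update_update (x : Idx n r) {z i : Fin n} (hzs : (z : ℕ) < s) (his : (i : ℕ) < s)
    (hzi : z ≠ i) {vz : Fin (r z)} {vi : Fin (r i)} (h : (vz : ℕ) + vi = x z + x i) :
    sEquiv n s r x (update (update x i vi) z vz) := by
  refine ⟨sum_eq_sum_of_add_eq_add (mem_lowCoords.2 hzs) (mem_lowCoords.2 his) hzi ?_ ?_,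
    fun j hj => ?_⟩
  · simp [update_of_ne hzi.symm, h]
  · intro j _ hjz hji
    simp [update_of_ne hjz, update_of_ne hji]
  · rw [update_of_ne (by rintro rfl; omega), update_of_ne (by rintro rfl; omega)]

theorem ne_update_update_iff (x : Idx n r) {z i : Fin n} (hzi : z ≠ i) {vz : Fin (r z)}
    {vi : Fin (r i)} (hvz : vz ≠ x z) (hvi : vi ≠ x i) (j : Fin n) :
    x j ≠ update (update x i vi) z vz j ↔ j ∈ ({z, i} : Finset (Fin n)) := by
  by_cases hjz : j = z
  · subst hjz; simpa using hvz.symm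
  by_cases hji : j = i
  · subst hji; simpa [update_of_ne hjz] using hvi.symm
  · simp [hjz, hji]

theorem Switchable.connectedIn_of_switch (hS : Switchable n s t r S) {z i : Fin n}
    (hzt : (z : ℕ) < t) (hzi : z ≠ i) {a x y : Idx n r} (hax : ConnectedIn S a x)
    (hxy : sEquiv n s r x y) (hdiff : ∀ j, x j ≠ y j ↔ j ∈ ({z, i} : Finset (Fin n))) :
    ConnectedIn S a y := by
  have hx := hax.mem_right
  have hy := hS.2 x y hx hxy
  have hd : hammingDist x y = 2 := by
    rw [hammingDist_eq_card_of_forall_ne_iff hdiff, card_pair hzi]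
  have hxm : hammingDist x (sw z x y) = 1 := by
    refine (hammingDist_eq_card_of_forall_ne_iff (L := {z}) fun j => ?_).trans (card_singleton z)
    by_cases hjz : j = z
    · subst hjz; simpa [sw] using (hdiff j).2 (by simp)
    · simp [sw, hjz]
  have hmy : hammingDist (sw z x y) y = 1 := by
    refine (hammingDist_eq_card_of_forall_ne_iff (L := {i}) fun j => ?_).trans (card_singleton i)
    by_cases hjz : j = z
    · subst hjz; simp [sw, hzi]
    · simpa [sw, hjz] using hdiff j
  exact (hax.snoc (hS.1 x y hx hy hd z hzt) hxm).snoc hy hmy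

theorem Switchable.connectedIn_of_connectedIn_of_sEquiv (hS : Switchable n s t r S)
    {z : Fin n} (hzs : (z : ℕ) < s) (hzt : (z : ℕ) < t) (hrz : 2 ≤ r z) {a b x : Idx n r}
    (hax : ConnectedIn S a x) (hxb : sEquiv n s r x b) : ConnectedIn S a b := by
  by_cases hxb' : x = b
  · exact hxb' ▸ hax
  have hne : ∃ i ∈ (lowCoords n s).erase z, (x i : ℕ) ≠ b i := by
    by_contra! h
    exact hxb' (hxb.eq_of_forall_mem_erase hzs fun i hi => Fin.ext (h i hi))
  obtain ⟨i, hiF, hmove⟩ := exists_unit_transfer (b z).isLt hrz (hxb.add_sum_erase hzs) hne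
  obtain ⟨hiz, his⟩ := mem_erase.1 hiF
  obtain ⟨vz, vi, hsum, hvz, hdist⟩ := Fin.exists_unit_transfer (u := x i) (v := b i) hmove
  have hvi : vi ≠ x i := by rintro rfl; exact lt_irrefl _ hdist
  have hxx' := sEquiv_update_update x hzs (mem_lowCoords.1 his) (Ne.symm hiz) hsum
  have hax' := hS.connectedIn_of_switch hzt (Ne.symm hiz) hax hxx'
    (ne_update_update_iff x (Ne.symm hiz) hvz hvi)
  exact hS.connectedIn_of_connectedIn_of_sEquiv hzs hzt hrz hax' (hxx'.symm.trans hxb)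
termination_by ∑ j ∈ (lowCoords n s).erase z, Nat.dist (x j) (b j)
decreasing_by
  refine sum_lt_sum (fun j hj => ?_) ⟨i, hiF, ?_⟩
  · rw [update_of_ne (ne_of_mem_erase hj)]
    by_cases hji : j = i
    · subst hji; simpa using hdist.le
    · rw [update_of_ne hji]
  · simpa [update_of_ne hiz] using hdist

end Switching

theorem sEquiv_implies_connected_general (n s t : ℕ) (r : Fin n → ℕ)
    (ht1 : 1 ≤ t) (hr : ∀ i, 2 ≤ r i)
    (S : Set (Idx n r)) (hS : Switchable n s t r S)
    (a b : Idx n r) (ha : a ∈ S) (hab : sEquiv n s r a b) :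
    ConnectedIn S a b := by
  by_cases h : 0 < s ∧ 0 < n
  · exact hS.connectedIn_of_connectedIn_of_sEquiv (z := ⟨0, h.2⟩) h.1 ht1 (hr _)
      (.refl ha) hab
  · have hab' : a = b := funext fun i => hab.2 i (by have := i.isLt; omega)
    exact hab' ▸ .refl ha

/-- in an `(s,t)`-switchable set, `s`-equivalence implies connectedness. -/
theorem sEquiv_implies_connected (n s t : ℕ) (r : Fin n → ℕ)
    (hs1 : 1 ≤ s) (hsn : s ≤ n) (ht1 : 1 ≤ t) (htn : t ≤ n) (hr : ∀ i, 2 ≤ r i)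
    (S : Set (Idx n r)) (hS : Switchable n s t r S)
    (a b : Idx n r) (ha : a ∈ S) (hb : b ∈ S) (hab : sEquiv n s r a b) :
    ConnectedIn S a b :=
  sEquiv_implies_connected_general n s t r ht1 hr S hS a b ha hab
end

section
/- Let s ≥ 2 and let S be an (s,t)-switchable set containing an element a with (a_1,…,a_s) ≠ (1,…,1) and (a_1,…,a_s) ≠ (r_1,…,r_s). Then every b ∈ N with (b_{s+1},…,b_n) = (a_{s+1},…,a_n) belongs to S. -/
open Finset

/-!
Fix the tail of `a` and sort the indices with that tail into levels by the sum of their first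
`s` entries; by `s`-equivalence `S` contains either all or none of a level.  If `x ∈ S` has
`x₀ + 1 < r₀` and `x_j ≠ 0` for some other `j < s`, then `x` and `x + e₀ - e_j` lie in `S`,
are at Hamming distance `2`, and switching them at `0` gives `x + e₀`, one level higher.
Unless the level is the top one, or is `0`, it contains such an `x`, so `S` climbs from the level
of `a` to the top.  The levels below are reached the same way after reversing every entry,
`x_i ↦ r_i - 1 - x_i`, which preserves switchability and turns the top level into level `0`.
-/

open Function

variable {n : ℕ} {r : Fin n → ℕ}

def block (n s : ℕ) : Finset (Fin n) := univ.filter (fun i : Fin n => (i : ℕ) < s)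

def blockSum (s : ℕ) (x : Idx n r) : ℕ := ∑ i ∈ block n s, (x i : ℕ)

def maxBlockSum (s : ℕ) (r : Fin n → ℕ) : ℕ := ∑ i ∈ block n s, (r i - 1)

lemma mem_block {s : ℕ} {i : Fin n} : i ∈ block n s ↔ (i : ℕ) < s := by simp [block]

lemma sEquiv_iff {s : ℕ} {x y : Idx n r} :
    sEquiv n s r x y ↔ blockSum s x = blockSum s y ∧ ∀ i : Fin n, s ≤ (i : ℕ) → x i = y i :=
  Iff.rfl

lemma blockSum_le_maxBlockSum (s : ℕ) (x : Idx n r) : blockSum s x ≤ maxBlockSum s r :=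
  sum_le_sum fun i _ => Nat.le_sub_one_of_lt (x i).isLt

lemma one_le_blockSum {s : ℕ} {x : Idx n r} (h : ∃ k : Fin n, (k : ℕ) < s ∧ (x k : ℕ) ≠ 0) :
    1 ≤ blockSum s x := by
  obtain ⟨k, hk, hxk⟩ := h
  have := single_le_sum (f := fun i => (x i : ℕ)) (fun _ _ => Nat.zero_le _) (mem_block.2 hk)
  simp only [blockSum] at this ⊢
  omega

lemma blockSum_update {s : ℕ} (x : Idx n r) {j : Fin n} (hj : (j : ℕ) < s) (v : Fin (r j)) :
    blockSum s (update x j v) + x j = blockSum s x + v := by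
  have hrest : ∑ i ∈ (block n s).erase j, (update x j v i : ℕ) =
      ∑ i ∈ (block n s).erase j, (x i : ℕ) :=
    sum_congr rfl fun i hi => by rw [update_of_ne (ne_of_mem_erase hi)]
  unfold blockSum
  rw [← add_sum_erase _ _ (mem_block.2 hj), ← add_sum_erase _ _ (mem_block.2 hj), hrest,
    update_self]
  ring

lemma sEquiv_update_update_s7 {s : ℕ} (x : Idx n r) {i k : Fin n} (hi : (i : ℕ) < s)
    (hk : (k : ℕ) < s) (hik : i ≠ k) (u : Fin (r i)) (v : Fin (r k))
    (huv : (u : ℕ) + v = x i + x k) : sEquiv n s r x (update (update x i u) k v) := by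
  refine ⟨?_, fun l hl => ?_⟩
  · have h₁ := blockSum_update (update x i u) hk v
    have h₂ := blockSum_update x hi u
    rw [update_of_ne hik.symm] at h₁
    change blockSum s x = blockSum s (update (update x i u) k v)
    omega
  · rw [update_of_ne (by rintro rfl; omega), update_of_ne (by rintro rfl; omega)]

lemma hammingDist_update_update (x : Idx n r) {i j : Fin n} (hij : i ≠ j) {u : Fin (r i)}
    {v : Fin (r j)} (hu : u ≠ x i) (hv : v ≠ x j) :
    hammingDist x (update (update x i u) j v) = 2 := by
  rw [hammingDist, ← card_pair hij]
  congr 1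
  ext k
  by_cases hkj : k = j
  · subst hkj; simp [hv.symm]
  · by_cases hki : k = i
    · subst hki; simp [update_of_ne hkj, hu.symm]
    · simp [hki, hkj]

lemma sw_update_update (x : Idx n r) {i j : Fin n} (hij : i ≠ j) (u : Fin (r i))
    (v : Fin (r j)) : sw i x (update (update x i u) j v) = update x i u := by
  funext k
  by_cases hki : k = i
  · subst hki; simp [sw, update_of_ne hij]
  · simp [sw, hki]

lemma exists_sEquiv_raisable {s : ℕ} (hr : ∀ i, 2 ≤ r i) {x : Idx n r} {i j : Fin n}
    (his : (i : ℕ) < s) (hjs : (j : ℕ) < s) (hij : i ≠ j) (h₁ : 1 ≤ blockSum s x)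
    (hM : blockSum s x < maxBlockSum s r) :
    ∃ w, sEquiv n s r x w ∧ (w i : ℕ) + 1 < r i ∧
      ∃ k : Fin n, (k : ℕ) < s ∧ k ≠ i ∧ (w k : ℕ) ≠ 0 := by
  suffices h : ((x i : ℕ) + 1 < r i ∧ ∃ k : Fin n, (k : ℕ) < s ∧ k ≠ i ∧ (x k : ℕ) ≠ 0) ∨
      (1 ≤ (x i : ℕ) ∧ ∃ k : Fin n, (k : ℕ) < s ∧ k ≠ i ∧ (x k : ℕ) + 1 < r k) by
    rcases h with ⟨hxi, hk⟩ | ⟨hxi, k, hks, hki, hxk⟩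
    · exact ⟨x, ⟨rfl, fun _ _ => rfl⟩, hxi, hk⟩
    · refine ⟨update (update x i ⟨x i - 1, by omega⟩) k ⟨x k + 1, hxk⟩,
        sEquiv_update_update_s7 x his hks hki.symm _ _ (by simp only; omega), ?_, k, hks, hki, ?_⟩
      · rw [update_of_ne hki.symm, update_self]
        simp only
        omega
      · simp
  by_cases hxi : (x i : ℕ) + 1 < r i
  · by_cases hk : ∃ k : Fin n, (k : ℕ) < s ∧ k ≠ i ∧ (x k : ℕ) ≠ 0
    · exact Or.inl ⟨hxi, hk⟩
    · push Not at hk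
      obtain ⟨l, hl, hxl⟩ := exists_ne_zero_of_sum_ne_zero (s := block n s)
        (f := fun i => (x i : ℕ)) (by unfold blockSum at h₁; omega)
      obtain rfl : l = i := by_contra fun hli => hxl (hk l (mem_block.1 hl) hli)
      refine Or.inr ⟨by omega, j, hjs, hij.symm, ?_⟩
      rw [hk j hjs hij.symm]
      exact hr j
  · obtain ⟨k, hk, hxk⟩ := exists_lt_of_sum_lt hM
    have := hr i
    refine Or.inr ⟨by omega, k, mem_block.1 hk, ?_, by omega⟩
    rintro rfl
    omega

namespace Switchable

variable {s t : ℕ} {S : Set (Idx n r)}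

lemma update_mem (hS : Switchable n s t r S) {x : Idx n r} (hx : x ∈ S) {i j : Fin n}
    (hit : (i : ℕ) < t) (hij : i ≠ j) {u : Fin (r i)} {v : Fin (r j)} (hu : u ≠ x i)
    (hv : v ≠ x j) (hy : update (update x i u) j v ∈ S) : update x i u ∈ S := by
  rw [← sw_update_update x hij u v]
  exact hS.1 x _ hx hy (hammingDist_update_update x hij hu hv) i hit

lemma update_succ_mem (hS : Switchable n s t r S) {x : Idx n r} (hx : x ∈ S) {i j : Fin n}
    (hit : (i : ℕ) < t) (his : (i : ℕ) < s) (hjs : (j : ℕ) < s) (hij : i ≠ j)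
    (hxi : (x i : ℕ) + 1 < r i) (hxj : (x j : ℕ) ≠ 0) : update x i ⟨x i + 1, hxi⟩ ∈ S := by
  have hy := hS.2 x _ hx (sEquiv_update_update_s7 x his hjs hij ⟨x i + 1, hxi⟩
    ⟨x j - 1, by omega⟩ (by simp only; omega))
  exact hS.update_mem hx hit hij (by simp [Fin.ext_iff]) (by simp [Fin.ext_iff]; omega) hy

lemma exists_mem_blockSum_succ (hS : Switchable n s t r S) (hr : ∀ i, 2 ≤ r i) {i j : Fin n}
    (hit : (i : ℕ) < t) (his : (i : ℕ) < s) (hjs : (j : ℕ) < s) (hij : i ≠ j) {x : Idx n r}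
    (hx : x ∈ S) (h₁ : 1 ≤ blockSum s x) (hM : blockSum s x < maxBlockSum s r) :
    ∃ z ∈ S, (∀ l : Fin n, s ≤ (l : ℕ) → z l = x l) ∧ blockSum s z = blockSum s x + 1 := by
  obtain ⟨w, hxw, hwi, k, hks, hki, hwk⟩ := exists_sEquiv_raisable hr his hjs hij h₁ hM
  refine ⟨update w i ⟨w i + 1, hwi⟩,
    hS.update_succ_mem (hS.2 x w hx hxw) hit his hks hki.symm hwi hwk, fun l hl => ?_, ?_⟩
  · rw [update_of_ne (by rintro rfl; omega)]
    exact (hxw.2 l hl).symm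
  · have := blockSum_update w his ⟨w i + 1, hwi⟩
    rw [(sEquiv_iff.1 hxw).1]
    simp only at this
    omega

lemma mem_of_blockSum_le (hS : Switchable n s t r S) (hr : ∀ i, 2 ≤ r i) {i j : Fin n}
    (hit : (i : ℕ) < t) (his : (i : ℕ) < s) (hjs : (j : ℕ) < s) (hij : i ≠ j) {a : Idx n r}
    (ha : a ∈ S) (ha₀ : ∃ k : Fin n, (k : ℕ) < s ∧ (a k : ℕ) ≠ 0) (b : Idx n r)
    (hb : ∀ l : Fin n, s ≤ (l : ℕ) → b l = a l) (hab : blockSum s a ≤ blockSum s b) :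
    b ∈ S := by
  have hlevel : ∀ m, blockSum s a ≤ m → m ≤ maxBlockSum s r →
      ∃ z ∈ S, (∀ l : Fin n, s ≤ (l : ℕ) → z l = a l) ∧ blockSum s z = m := by
    intro m hm
    induction m, hm using Nat.le_induction with
    | base => exact fun _ => ⟨a, ha, fun _ _ => rfl, rfl⟩
    | succ m hm ih =>
      intro hmM
      obtain ⟨z, hz, hza, rfl⟩ := ih (by omega)
      obtain ⟨z', hz', hz'z, hsum⟩ := hS.exists_mem_blockSum_succ hr hit his hjs hij hz
        (by have := one_le_blockSum ha₀; omega) (by omega)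
      exact ⟨z', hz', fun l hl => (hz'z l hl).trans (hza l hl), hsum⟩
  obtain ⟨z, hz, hza, hzb⟩ := hlevel _ hab (blockSum_le_maxBlockSum s b)
  exact hS.2 z b hz ⟨hzb, fun l hl => (hza l hl).trans (hb l hl).symm⟩

end Switchable

def revIdx (x : Idx n r) : Idx n r := fun i => (x i).rev

@[simp]
lemma revIdx_revIdx (x : Idx n r) : revIdx (revIdx x) = x := funext fun i => Fin.rev_rev (x i)

lemma val_revIdx (x : Idx n r) (i : Fin n) : (revIdx x i : ℕ) = r i - 1 - x i := by
  simp only [revIdx, Fin.val_rev]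
  omega

lemma blockSum_revIdx (s : ℕ) (x : Idx n r) :
    blockSum s (revIdx x) + blockSum s x = maxBlockSum s r := by
  unfold blockSum maxBlockSum
  rw [← sum_add_distrib]
  refine sum_congr rfl fun i _ => ?_
  have := (x i).isLt
  rw [val_revIdx]
  omega

lemma sEquiv_revIdx {s : ℕ} {x y : Idx n r} (h : sEquiv n s r x y) :
    sEquiv n s r (revIdx x) (revIdx y) := by
  refine ⟨?_, fun l hl => congrArg Fin.rev (h.2 l hl)⟩
  have hx := blockSum_revIdx s x
  have hy := blockSum_revIdx s y
  change blockSum s (revIdx x) = blockSum s (revIdx y)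
  rw [(sEquiv_iff.1 h).1] at hx
  omega

lemma hammingDist_revIdx (x y : Idx n r) : hammingDist (revIdx x) (revIdx y) = hammingDist x y :=
  hammingDist_comp (fun _ => Fin.rev) fun _ => Fin.rev_injective

lemma sw_revIdx (i : Fin n) (x y : Idx n r) : sw i (revIdx x) (revIdx y) = revIdx (sw i x y) := by
  funext k
  by_cases hk : k = i <;> simp [sw, revIdx, hk]

lemma Switchable.preimage_revIdx {s t : ℕ} {S : Set (Idx n r)} (hS : Switchable n s t r S) :
    Switchable n s t r (revIdx ⁻¹' S) := by
  refine ⟨fun x y hx hy hxy i hi => ?_, fun x y hx hxy => hS.2 _ _ hx (sEquiv_revIdx hxy)⟩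
  rw [Set.mem_preimage, ← sw_revIdx]
  exact hS.1 _ _ hx hy (by rwa [hammingDist_revIdx]) i hi

theorem switchable_contains_all_with_same_tail_general (n s t : ℕ) (r : Fin n → ℕ)
    (hs2 : 2 ≤ s) (hsn : s ≤ n) (ht1 : 1 ≤ t) (hr : ∀ i, 2 ≤ r i)
    (S : Set (Idx n r)) (hS : Switchable n s t r S)
    (a : Idx n r) (ha : a ∈ S)
    (hnotbot : ∃ j : Fin n, (j : ℕ) < s ∧ (a j : ℕ) ≠ 0)
    (hnottop : ∃ j : Fin n, (j : ℕ) < s ∧ (a j : ℕ) ≠ r j - 1) :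
    ∀ b : Idx n r, (∀ i : Fin n, s ≤ (i : ℕ) → b i = a i) → b ∈ S := by
  intro b hb
  let i₀ : Fin n := ⟨0, by omega⟩
  let i₁ : Fin n := ⟨1, by omega⟩
  have hi₀ : (i₀ : ℕ) < s := by simp [i₀]; omega
  have hi₁ : (i₁ : ℕ) < s := by simp [i₁]; omega
  have hi₀₁ : i₀ ≠ i₁ := by simp [i₀, i₁, Fin.ext_iff]
  have hi₀t : (i₀ : ℕ) < t := ht1
  rcases le_total (blockSum s a) (blockSum s b) with hab | hba
  · exact hS.mem_of_blockSum_le hr hi₀t hi₀ hi₁ hi₀₁ ha hnotbot b hb hab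
  · have hrev_a₀ : ∃ k : Fin n, (k : ℕ) < s ∧ (revIdx a k : ℕ) ≠ 0 := by
      obtain ⟨k, hk, hak⟩ := hnottop
      have := (a k).isLt
      exact ⟨k, hk, by rw [val_revIdx]; omega⟩
    have hrev_ab : blockSum s (revIdx a) ≤ blockSum s (revIdx b) := by
      have := blockSum_revIdx s a
      have := blockSum_revIdx s b
      omega
    rw [← revIdx_revIdx b]
    exact hS.preimage_revIdx.mem_of_blockSum_le hr hi₀t hi₀ hi₁ hi₀₁
      (by rwa [Set.mem_preimage, revIdx_revIdx]) hrev_a₀ (revIdx b)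
      (fun l hl => congrArg Fin.rev (hb l hl)) hrev_ab

/-- if `s ≥ 2` and an `(s,t)`-switchable set `S` contains an element `a`
whose first `s` components are neither all `1` nor all maximal, then every `b` agreeing
with `a` in the components beyond `s` belongs to `S`. -/
theorem switchable_contains_all_with_same_tail (n s t : ℕ) (r : Fin n → ℕ)
    (hs2 : 2 ≤ s) (hsn : s ≤ n) (ht1 : 1 ≤ t) (htn : t ≤ n) (hr : ∀ i, 2 ≤ r i)
    (S : Set (Idx n r)) (hS : Switchable n s t r S)
    (a : Idx n r) (ha : a ∈ S)
    (hnotbot : ∃ j : Fin n, (j : ℕ) < s ∧ (a j : ℕ) ≠ 0)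
    (hnottop : ∃ j : Fin n, (j : ℕ) < s ∧ (a j : ℕ) ≠ r j - 1) :
    ∀ b : Idx n r, (∀ i : Fin n, s ≤ (i : ℕ) → b i = a i) → b ∈ S :=
  switchable_contains_all_with_same_tail_general n s t r hs2 hsn ht1 hr S hS a ha hnotbot hnottop
end

section
/- For n ≥ 3, the (n,t)-switchable subsets of N are exactly: ∅, {(1,…,1)}, {(r_1,…,r_n)}, {(1,…,1), (r_1,…,r_n)}, and N itself. -/
open Finset

/-! For `s = n`, switchability forces `S` to be a union of level sets of the weight `∑ i, a i`,
whose values are `0, …, M` with `M = ∑ i, (r i - 1)`; the extreme levels are `{bot}` and `{top}`.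
An interior level contains `c` and the index `d` obtained from `c` by moving one unit from
coordinate `0` to coordinate `1`. They are at Hamming distance 2, and switching them at
coordinate `0` gives indices of weight one less and one more, so a switchable set meeting an
interior level contains every level. Conversely every subset of `{bot, top}` is switchable,
because `bot` and `top` are at distance `n ≥ 3`. -/

theorem Nat.forall_le_of_interior_closed {P : ℕ → Prop} {M w : ℕ} (hw : P w) (hw0 : 0 < w)
    (hwM : w < M) (hstep : ∀ k, 0 < k → k < M → P k → P (k - 1) ∧ P (k + 1)) :
    ∀ k ≤ M, P k := by
  intro k hkM
  rcases le_total w k with hwk | hkw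
  · induction k, hwk using Nat.le_induction with
    | base => exact hw
    | succ k hwk ih => exact (hstep k (by omega) (by omega) (ih (by omega))).2
  · induction hkw using Nat.decreasingInduction with
    | self => exact hw
    | of_succ k hkw ih => simpa using (hstep (k + 1) (by omega) (by omega) (ih (by omega))).1

theorem exists_sum_eq_of_le {ι : Type*} [Fintype ι] [DecidableEq ι] {l u : ι → ℕ} (hlu : l ≤ u)
    {s : ℕ} (hls : ∑ i, l i ≤ s) (hsu : s ≤ ∑ i, u i) :
    ∃ x : ι → ℕ, l ≤ x ∧ x ≤ u ∧ ∑ i, x i = s := by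
  induction s, hls using Nat.le_induction with
  | base => exact ⟨l, le_rfl, hlu, rfl⟩
  | succ s _ ih =>
    obtain ⟨x, hlx, hxu, hx⟩ := ih (by omega)
    obtain ⟨i, -, hi⟩ : ∃ i ∈ Finset.univ, x i < u i :=
      Finset.exists_lt_of_sum_lt (by omega)
    refine ⟨Function.update x i (x i + 1), fun j => ?_, fun j => ?_, ?_⟩
    · rcases eq_or_ne j i with rfl | hj
      · simpa using (hlx j).trans (Nat.le_succ _)
      · simpa [hj] using hlx j
    · rcases eq_or_ne j i with rfl | hj
      · simpa using hi
      · simpa [hj] using hxu j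
    · rw [Finset.sum_update_of_mem (Finset.mem_univ i), ← hx,
        ← Finset.add_sum_erase _ _ (Finset.mem_univ i), Finset.sdiff_singleton_eq_erase]
      ring

theorem hammingDist_update_update_s8 {ι : Type*} [Fintype ι] [DecidableEq ι] {β : ι → Type*}
    [∀ i, DecidableEq (β i)] (x : ∀ i, β i) {i j : ι} (hij : i ≠ j) {v : β i} {w : β j}
    (hv : v ≠ x i) (hw : w ≠ x j) :
    hammingDist x (Function.update (Function.update x i v) j w) = 2 := by
  rw [hammingDist, ← Finset.card_pair hij]
  congr 1
  ext m
  rcases eq_or_ne m j with rfl | hmj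
  · simp [hw.symm, hij.symm]
  rcases eq_or_ne m i with rfl | hmi
  · simp [hv.symm, hmj]
  · simp [hmi, hmj]

section Weight

variable {n : ℕ} {r : Fin n → ℕ}

def weight (a : Idx n r) : ℕ := ∑ i, (a i : ℕ)

def maxWeight (r : Fin n → ℕ) : ℕ := ∑ i, (r i - 1)

theorem sEquiv_n_iff_weight_eq {a b : Idx n r} : sEquiv n n r a b ↔ weight a = weight b := by
  simp [sEquiv, weight, Fin.is_lt, not_le_of_gt]

theorem weight_le_maxWeight (a : Idx n r) : weight a ≤ maxWeight r :=
  Finset.sum_le_sum fun i _ => Nat.le_sub_one_of_lt (a i).is_lt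

theorem weight_update (a : Idx n r) (i : Fin n) (v : Fin (r i)) :
    weight (Function.update a i v) + a i = weight a + v := by
  unfold weight
  rw [← Finset.add_sum_erase _ _ (Finset.mem_univ i), ← Finset.add_sum_erase _ _ (Finset.mem_univ i),
    Finset.sum_congr rfl fun j hj => by rw [Function.update_of_ne (Finset.ne_of_mem_erase hj)]]
  simp only [Function.update_self]
  ring

theorem weight_eq_zero_iff {a bot : Idx n r} (hbot : ∀ i, (bot i : ℕ) = 0) :
    weight a = 0 ↔ a = bot := by
  simp [weight, funext_iff, Fin.ext_iff, hbot]

theorem weight_eq_maxWeight_iff {a top : Idx n r} (htop : ∀ i, (top i : ℕ) = r i - 1) :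
    weight a = maxWeight r ↔ a = top := by
  have hle : ∀ i ∈ Finset.univ, (a i : ℕ) ≤ r i - 1 := fun i _ => Nat.le_sub_one_of_lt (a i).is_lt
  simp [weight, maxWeight, Finset.sum_eq_sum_iff_of_le hle, funext_iff, Fin.ext_iff, htop]

theorem sw_eq_update (i : Fin n) (a b : Idx n r) : sw i a b = Function.update a i (b i) := by
  funext j
  rcases eq_or_ne j i with rfl | hj <;> simp [sw, Function.update_of_ne, *]

theorem hammingDist_bot_top (hr : ∀ i, 2 ≤ r i) {bot top : Idx n r}
    (hbot : ∀ i, (bot i : ℕ) = 0) (htop : ∀ i, (top i : ℕ) = r i - 1) :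
    hammingDist bot top = n := by
  have hne : ∀ i, bot i ≠ top i := fun i h => by
    have := congrArg Fin.val h
    have := hr i
    have := hbot i
    have := htop i
    omega
  simp [hammingDist, hne]

theorem exists_weight_eq_of_pos_of_lt (hr : ∀ i, 2 ≤ r i) {i j : Fin n} (hij : i ≠ j) {k : ℕ}
    (hk0 : 0 < k) (hkM : k < maxWeight r) :
    ∃ a : Idx n r, weight a = k ∧ 0 < (a i : ℕ) ∧ (a j : ℕ) + 1 < r j := by
  set l : Fin n → ℕ := Pi.single i 1
  set u : Fin n → ℕ := Function.update (fun m => r m - 1) j (r j - 2)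
  have hu_apply : ∀ m, u m + (if m = j then 1 else 0) = r m - 1 := fun m => by
    have := hr m
    rcases eq_or_ne m j with rfl | hmj
    · simp [u]; omega
    · simp [u, hmj]
  have hlu : l ≤ u := fun m => by
    have := hu_apply m
    have := hr m
    rcases eq_or_ne m i with rfl | hmi
    · simp [l, hij] at *; omega
    · simp [l, hmi]
  have hl : ∑ m, l m = 1 := by simp [l]
  have hu : ∑ m, u m + 1 = maxWeight r := by
    simp only [maxWeight, ← hu_apply, Finset.sum_add_distrib, Finset.sum_ite_eq', Finset.mem_univ,
      if_true]
  obtain ⟨x, hlx, hxu, hx⟩ := exists_sum_eq_of_le hlu (s := k) (by omega) (by omega)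
  have hu_le : ∀ m, u m ≤ r m - 1 := fun m => by
    have := hu_apply m
    split_ifs at this <;> omega
  have hxr : ∀ m, x m < r m := fun m => by
    have : x m ≤ r m - 1 := (hxu m).trans (hu_le m)
    have := hr m
    omega
  refine ⟨fun m => ⟨x m, hxr m⟩, hx, ?_, ?_⟩
  · exact (by simpa [l] using hlx i : 1 ≤ x i)
  · have hxj : x j ≤ u j := hxu j
    have huj := hu_apply j
    rw [if_pos rfl] at huj
    have := hr j
    show x j + 1 < r j
    omega

end Weight

section Switchable

variable {n t : ℕ} {r : Fin n → ℕ} {S : Set (Idx n r)}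

theorem Switchable.mem_of_weight_eq (hS : Switchable n n t r S) {a b : Idx n r} (ha : a ∈ S)
    (hab : weight a = weight b) : b ∈ S :=
  hS.2 a b ha (sEquiv_n_iff_weight_eq.2 hab)

theorem Switchable.exists_weight_pred_and_succ (hS : Switchable n n t r S) (ht : 1 ≤ t)
    (hn : 2 ≤ n) (hr : ∀ i, 2 ≤ r i) {a : Idx n r} (ha : a ∈ S) (h0 : 0 < weight a)
    (hM : weight a < maxWeight r) :
    (∃ b ∈ S, weight b + 1 = weight a) ∧ ∃ b ∈ S, weight b = weight a + 1 := by
  set i : Fin n := ⟨0, by omega⟩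
  set j : Fin n := ⟨1, by omega⟩
  have hij : i ≠ j := by simp [i, j, Fin.ext_iff]
  obtain ⟨c, hc, hci, hcj⟩ := exists_weight_eq_of_pos_of_lt hr hij h0 hM
  obtain ⟨lo, hlo⟩ : ∃ lo : Fin (r i), (lo : ℕ) + 1 = c i := ⟨⟨c i - 1, by omega⟩, by simp; omega⟩
  obtain ⟨up, hup⟩ : ∃ up : Fin (r j), (up : ℕ) = c j + 1 := ⟨⟨c j + 1, hcj⟩, rfl⟩
  set d := Function.update (Function.update c i lo) j up with hd
  have hwlo : weight (Function.update c i lo) + 1 = weight c := by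
    have := weight_update c i lo
    omega
  have hwup : weight (Function.update c j up) = weight c + 1 := by
    have := weight_update c j up
    omega
  have hwd : weight d = weight c := by
    have := weight_update (Function.update c i lo) j up
    rw [Function.update_of_ne hij.symm, ← hd] at this
    omega
  have hcS : c ∈ S := hS.mem_of_weight_eq ha hc.symm
  have hdS : d ∈ S := hS.mem_of_weight_eq hcS hwd.symm
  have hcd : hammingDist c d = 2 :=
    hammingDist_update_update_s8 c hij (by simp [Fin.ext_iff]; omega) (by simp [Fin.ext_iff]; omega)
  have hit : (i : ℕ) < t := ht
  refine ⟨⟨sw i c d, hS.1 c d hcS hdS hcd i hit, ?_⟩,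
    ⟨sw i d c, hS.1 d c hdS hcS (by rwa [hammingDist_comm]) i hit, ?_⟩⟩
  · rw [sw_eq_update, show d i = lo by simp [d, hij]]
    omega
  · rw [sw_eq_update, Function.update_comm hij.symm, Function.update_idem, Function.update_eq_self]
    omega

theorem Switchable.eq_univ (hS : Switchable n n t r S) (ht : 1 ≤ t) (hn : 2 ≤ n)
    (hr : ∀ i, 2 ≤ r i) {a : Idx n r} (ha : a ∈ S) (h0 : 0 < weight a)
    (hM : weight a < maxWeight r) : S = Set.univ := by
  have hlevels : ∀ k ≤ maxWeight r, ∃ b ∈ S, weight b = k := by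
    refine Nat.forall_le_of_interior_closed ⟨a, ha, rfl⟩ h0 hM ?_
    rintro k hk0 hkM ⟨b, hb, rfl⟩
    obtain ⟨⟨b₁, hb₁, h₁⟩, ⟨b₂, hb₂, h₂⟩⟩ :=
      hS.exists_weight_pred_and_succ ht hn hr hb hk0 hkM
    exact ⟨⟨b₁, hb₁, by omega⟩, ⟨b₂, hb₂, h₂⟩⟩
  refine Set.eq_univ_of_forall fun c => ?_
  obtain ⟨b, hb, hbc⟩ := hlevels (weight c) (weight_le_maxWeight c)
  exact hS.mem_of_weight_eq hb hbc

theorem switchable_of_subset_pair (hn : 3 ≤ n) (hr : ∀ i, 2 ≤ r i) {bot top : Idx n r}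
    (hbot : ∀ i, (bot i : ℕ) = 0) (htop : ∀ i, (top i : ℕ) = r i - 1) (hS : S ⊆ {bot, top}) :
    Switchable n n t r S := by
  have hdist := hammingDist_bot_top hr hbot htop
  have hdist' : hammingDist top bot = n := by rwa [hammingDist_comm]
  constructor
  · intro a b ha hb hab
    exfalso
    rcases hS ha with rfl | rfl <;> rcases hS hb with rfl | rfl <;>
      simp only [hammingDist_self, hdist, hdist'] at hab <;> omega
  · intro a b ha hab
    rw [sEquiv_n_iff_weight_eq] at hab
    rcases hS ha with rfl | rfl
    · have : b = a := (weight_eq_zero_iff hbot).1 (by rw [← hab, (weight_eq_zero_iff hbot).2 rfl])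
      exact this ▸ ha
    · have : b = a :=
        (weight_eq_maxWeight_iff htop).1 (by rw [← hab, (weight_eq_maxWeight_iff htop).2 rfl])
      exact this ▸ ha

theorem switchable_univ {s : ℕ} : Switchable n s t r Set.univ :=
  ⟨fun _ _ _ _ _ _ _ => Set.mem_univ _, fun _ _ _ _ => Set.mem_univ _⟩

end Switchable

theorem switchable_classification_s_eq_n_general (n t : ℕ) (r : Fin n → ℕ)
    (hn : 3 ≤ n) (ht1 : 1 ≤ t) (hr : ∀ i, 2 ≤ r i)
    (bot top : Idx n r) (hbot : ∀ i, (bot i : ℕ) = 0) (htop : ∀ i, (top i : ℕ) = r i - 1)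
    (S : Set (Idx n r)) :
    Switchable n n t r S ↔
      S = ∅ ∨ S = {bot} ∨ S = {top} ∨ S = {bot, top} ∨ S = Set.univ := by
  suffices Switchable n n t r S ↔ S ⊆ {bot, top} ∨ S = Set.univ by
    rw [this, Set.subset_pair_iff_eq]
    simp only [or_assoc]
  constructor
  · intro hS
    by_cases hint : ∃ a ∈ S, 0 < weight a ∧ weight a < maxWeight r
    · obtain ⟨a, ha, h0, hM⟩ := hint
      exact Or.inr (hS.eq_univ ht1 (by omega) hr ha h0 hM)
    · push Not at hint
      refine Or.inl fun a ha => ?_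
      rcases Nat.eq_zero_or_pos (weight a) with h0 | h0
      · exact Or.inl ((weight_eq_zero_iff hbot).1 h0)
      · exact Or.inr ((weight_eq_maxWeight_iff htop).1
          (le_antisymm (weight_le_maxWeight a) (hint a ha h0)))
  · rintro (hS | rfl)
    · exact switchable_of_subset_pair hn hr hbot htop hS
    · exact switchable_univ

/-- for `n ≥ 3`, the `(n,t)`-switchable sets are exactly
`∅`, `{(1,…,1)}`, `{(r 1,…,r n)}`, `{(1,…,1),(r 1,…,r n)}` and `N`. -/
theorem switchable_classification_s_eq_n (n t : ℕ) (r : Fin n → ℕ)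
    (hn : 3 ≤ n) (ht1 : 1 ≤ t) (htn : t ≤ n) (hr : ∀ i, 2 ≤ r i)
    (bot top : Idx n r) (hbot : ∀ i, (bot i : ℕ) = 0) (htop : ∀ i, (top i : ℕ) = r i - 1)
    (S : Set (Idx n r)) :
    Switchable n n t r S ↔
      S = ∅ ∨ S = {bot} ∨ S = {top} ∨ S = {bot, top} ∨ S = Set.univ :=
  switchable_classification_s_eq_n_general n t r hn ht1 hr bot top hbot htop S
end

section
/- For n = 3, the (2,t)-switchable subsets of N = [r_1] × [r_2] × [r_3] are exactly: (1) the sets [r_1] × [r_2] × B for B ⊆ [r_3]; and (2) the sets S such that for each l ∈ [r_3] there is at most one a ∈ S with a_3 = l, and each such a satisfies (a_1, a_2) = (1,1) or (a_1, a_2) = (r_1, r_2). -/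
open Finset

/-!
Closure under 2-equivalence means that membership of `a` in `S` depends only on the layer `a 2`
and the diagonal `a 0 + a 1`. On an interior diagonal of a layer there are two points at Hamming
distance 2, and switching their first coordinates reaches both neighbouring diagonals; hence a layer
meeting `S` in a non-corner point lies entirely in `S`, and so does a layer meeting `S` in two
points, since switching the two opposite corners gives a non-corner point. A full layer in turn
fills every layer that `S` meets: switch a point of `S` with a point of the full layer sharing its
second coordinate. If no layer contains two points of `S`, each point is a corner, and two corners
in different layers are at Hamming distance 1 or 3, so nothing is to be switched.
-/

theorem Nat.mem_of_le_of_interior_step {T : Set ℕ} {M s₀ : ℕ} (h₀ : s₀ ∈ T) (hs₀ : 0 < s₀)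
    (hs₀M : s₀ < M) (hstep : ∀ s ∈ T, 0 < s → s < M → s - 1 ∈ T ∧ s + 1 ∈ T) {s : ℕ}
    (hs : s ≤ M) : s ∈ T := by
  rcases le_total s s₀ with h | h
  · induction h using Nat.decreasingInduction with
    | self => exact h₀
    | of_succ k hk ih => simpa using (hstep (k + 1) (ih (by omega)) (by omega) (by omega)).1
  · induction s, h using Nat.le_induction with
    | base => exact h₀
    | succ k hk ih => exact (hstep k (ih (by omega)) (by omega) (by omega)).2

section
variable {n s : ℕ} {r : Fin n → ℕ} {S : Set (Idx n r)}

theorem Switchable.mono {t t' : ℕ} (h : Switchable n s t r S) (ht : t' ≤ t) :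
    Switchable n s t' r S :=
  ⟨fun a b ha hb hd i hi => h.1 a b ha hb hd i (hi.trans_le ht), h.2⟩

theorem switchable_setOf_apply_mem (t : ℕ) (k : Fin n) (hk : s ≤ k) (B : Set (Fin (r k))) :
    Switchable n s t r {a | a k ∈ B} := by
  refine ⟨fun a b ha hb _ i _ => ?_, fun a b ha hab => ?_⟩
  · show (if k = i then b k else a k) ∈ B
    split_ifs
    exacts [hb, ha]
  · show b k ∈ B
    rwa [← hab.2 k hk]

end

namespace Idx3

variable {r : Fin 3 → ℕ}

def mk (x : Fin (r 0)) (y : Fin (r 1)) (z : Fin (r 2)) : Idx 3 r :=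
  fun i => match i with
  | ⟨0, _⟩ => x
  | ⟨1, _⟩ => y
  | ⟨2, _⟩ => z

theorem ext {a b : Idx 3 r} (h0 : a 0 = b 0) (h1 : a 1 = b 1) (h2 : a 2 = b 2) : a = b := by
  funext i
  fin_cases i
  exacts [h0, h1, h2]

def diagIndex (a : Idx 3 r) : ℕ := a 0 + a 1

def IsCornerPoint (a : Idx 3 r) : Prop :=
  ((a 0 : ℕ) = 0 ∧ (a 1 : ℕ) = 0) ∨ ((a 0 : ℕ) = r 0 - 1 ∧ (a 1 : ℕ) = r 1 - 1)

theorem diagIndex_le (a : Idx 3 r) : diagIndex a ≤ r 0 - 1 + (r 1 - 1) := by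
  have := (a 0).isLt
  have := (a 1).isLt
  unfold diagIndex
  omega

theorem isCornerPoint_iff (a : Idx 3 r) :
    IsCornerPoint a ↔ diagIndex a = 0 ∨ diagIndex a = r 0 - 1 + (r 1 - 1) := by
  have := (a 0).isLt
  have := (a 1).isLt
  unfold IsCornerPoint diagIndex
  omega

theorem IsCornerPoint.eq_of_diagIndex_eq {a b : Idx 3 r} (ha : IsCornerPoint a)
    (hd : diagIndex a = diagIndex b) (h2 : a 2 = b 2) : a = b := by
  have := (b 0).isLt
  have := (b 1).isLt
  unfold IsCornerPoint diagIndex at *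
  exact ext (Fin.ext (by omega)) (Fin.ext (by omega)) h2

theorem IsCornerPoint.val_zero_eq_iff (hr₀ : 2 ≤ r 0) (hr₁ : 2 ≤ r 1) {a b : Idx 3 r}
    (ha : IsCornerPoint a) (hb : IsCornerPoint b) : (a 0 : ℕ) = b 0 ↔ (a 1 : ℕ) = b 1 := by
  unfold IsCornerPoint at *
  omega

theorem hammingDist_eq (a b : Idx 3 r) : hammingDist a b =
    (if a 0 = b 0 then 0 else 1) + (if a 1 = b 1 then 0 else 1) + (if a 2 = b 2 then 0 else 1) := by
  simp only [hammingDist, Finset.card_filter, Fin.sum_univ_three, ne_eq, ite_not]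

theorem sEquiv_iff (a b : Idx 3 r) :
    sEquiv 3 2 r a b ↔ diagIndex a = diagIndex b ∧ a 2 = b 2 := by
  have hlt : univ.filter (fun i : Fin 3 => (i : ℕ) < 2) = {0, 1} := by decide
  have hge : ∀ i : Fin 3, 2 ≤ (i : ℕ) ↔ i = 2 := by decide
  simp only [sEquiv, hlt, sum_pair (show (0 : Fin 3) ≠ 1 by decide), hge, forall_eq, diagIndex]

theorem exists_pair_of_not_isCornerPoint (hr₀ : 2 ≤ r 0) (hr₁ : 2 ≤ r 1) {a : Idx 3 r}
    (ha : ¬IsCornerPoint a) :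
    ∃ b c : Idx 3 r, b 2 = a 2 ∧ c 2 = a 2 ∧ diagIndex b = diagIndex a ∧
      diagIndex c = diagIndex a ∧ (c 0 : ℕ) = b 0 + 1 := by
  obtain ⟨hs₀, hs⟩ : 0 < diagIndex a ∧ diagIndex a < r 0 - 1 + (r 1 - 1) := by
    have := diagIndex_le a
    rw [isCornerPoint_iff] at ha
    omega
  generalize diagIndex a = s at hs₀ hs ⊢
  exact ⟨mk ⟨s - (r 1 - 1), by omega⟩ ⟨s - (s - (r 1 - 1)), by omega⟩ (a 2),
    mk ⟨s - (r 1 - 1) + 1, by omega⟩ ⟨s - (s - (r 1 - 1)) - 1, by omega⟩ (a 2),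
    rfl, rfl, by simp only [diagIndex, mk]; omega, by simp only [diagIndex, mk]; omega, rfl⟩

end Idx3

namespace Switchable

open Idx3

variable {t : ℕ} {r : Fin 3 → ℕ} {S : Set (Idx 3 r)} {a b : Idx 3 r}

theorem mem_of_diagIndex_eq (hS : Switchable 3 2 t r S) (ha : a ∈ S)
    (hd : diagIndex a = diagIndex b) (h2 : a 2 = b 2) : b ∈ S :=
  hS.2 a b ha ((sEquiv_iff a b).2 ⟨hd, h2⟩)

theorem exists_mem_diagIndex_succ_pred (hr₀ : 2 ≤ r 0) (hr₁ : 2 ≤ r 1)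
    (hS : Switchable 3 2 1 r S) (ha : a ∈ S) (hc : ¬IsCornerPoint a) :
    (∃ b ∈ S, b 2 = a 2 ∧ diagIndex b = diagIndex a + 1) ∧
      (∃ b ∈ S, b 2 = a 2 ∧ diagIndex b = diagIndex a - 1) := by
  obtain ⟨b, c, hb2, hc2, hbd, hcd, hbc⟩ := exists_pair_of_not_isCornerPoint hr₀ hr₁ hc
  have hbS := hS.mem_of_diagIndex_eq ha hbd.symm hb2.symm
  have hcS := hS.mem_of_diagIndex_eq ha hcd.symm hc2.symm
  unfold diagIndex at hbd hcd
  have hdist : hammingDist b c = 2 := by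
    have h0 : b 0 ≠ c 0 := by rw [Ne, Fin.ext_iff]; omega
    have h1 : b 1 ≠ c 1 := by rw [Ne, Fin.ext_iff]; omega
    simp [hammingDist_eq, h0, h1, hb2.trans hc2.symm]
  refine ⟨⟨sw 0 b c, hS.1 b c hbS hcS hdist 0 one_pos, hb2, ?_⟩,
    ⟨sw 0 c b, hS.1 c b hcS hbS (hammingDist_comm b c ▸ hdist) 0 one_pos, hc2, ?_⟩⟩
  · show (c 0 : ℕ) + b 1 = a 0 + a 1 + 1
    omega
  · show (b 0 : ℕ) + c 1 = a 0 + a 1 - 1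
    omega

theorem forall_mem_of_not_isCornerPoint (hr₀ : 2 ≤ r 0) (hr₁ : 2 ≤ r 1)
    (hS : Switchable 3 2 1 r S) (ha : a ∈ S) (hc : ¬IsCornerPoint a) (p : Idx 3 r)
    (hp : p 2 = a 2) : p ∈ S := by
  rw [isCornerPoint_iff] at hc
  obtain ⟨b, hb, hb2, hbd⟩ : ∃ b ∈ S, b 2 = a 2 ∧ diagIndex b = diagIndex p := by
    refine Nat.mem_of_le_of_interior_step (T := {s | ∃ b ∈ S, b 2 = a 2 ∧ diagIndex b = s})
      ⟨a, ha, rfl, rfl⟩ (by omega) (by have := diagIndex_le a; omega) ?_ (diagIndex_le p)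
    rintro _ ⟨b, hb, hb2, rfl⟩ hs₀ hs
    have hbc : ¬IsCornerPoint b := by rw [isCornerPoint_iff]; omega
    obtain ⟨⟨c, hc, hc2, hcd⟩, ⟨c', hc', hc2', hcd'⟩⟩ :=
      hS.exists_mem_diagIndex_succ_pred hr₀ hr₁ hb hbc
    exact ⟨⟨c', hc', hc2'.trans hb2, hcd'⟩, ⟨c, hc, hc2.trans hb2, hcd⟩⟩
  exact hS.mem_of_diagIndex_eq hb hbd (hb2.trans hp.symm)

theorem exists_not_isCornerPoint_of_ne (hr₀ : 2 ≤ r 0) (hr₁ : 2 ≤ r 1)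
    (hS : Switchable 3 2 1 r S) (ha : a ∈ S) (hb : b ∈ S) (h2 : a 2 = b 2) (hab : a ≠ b) :
    ∃ c ∈ S, c 2 = a 2 ∧ ¬IsCornerPoint c := by
  by_cases hac : IsCornerPoint a
  swap
  · exact ⟨a, ha, rfl, hac⟩
  by_cases hbc : IsCornerPoint b
  swap
  · exact ⟨b, hb, h2.symm, hbc⟩
  have h0 : (a 0 : ℕ) ≠ b 0 := fun h =>
    hab (ext (Fin.ext h) (Fin.ext ((hac.val_zero_eq_iff hr₀ hr₁ hbc).1 h)) h2)
  have h1 : (a 1 : ℕ) ≠ b 1 := mt (hac.val_zero_eq_iff hr₀ hr₁ hbc).2 h0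
  have hdist : hammingDist a b = 2 := by
    simp [hammingDist_eq, Fin.ext_iff, h0, h1, h2]
  refine ⟨sw 0 a b, hS.1 a b ha hb hdist 0 one_pos, rfl, ?_⟩
  have hsw : diagIndex (sw 0 a b) = b 0 + a 1 := rfl
  rw [isCornerPoint_iff, hsw]
  unfold IsCornerPoint at hac hbc
  omega

theorem forall_mem_of_ne (hr₀ : 2 ≤ r 0) (hr₁ : 2 ≤ r 1) (hS : Switchable 3 2 1 r S)
    (ha : a ∈ S) (hb : b ∈ S) (h2 : a 2 = b 2) (hab : a ≠ b) (p : Idx 3 r) (hp : p 2 = a 2) :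
    p ∈ S := by
  obtain ⟨c, hc, hc2, hcc⟩ := hS.exists_not_isCornerPoint_of_ne hr₀ hr₁ ha hb h2 hab
  exact hS.forall_mem_of_not_isCornerPoint hr₀ hr₁ hc hcc p (hp.trans hc2.symm)

theorem forall_mem_of_forall_mem (hr₀ : 2 ≤ r 0) (hr₁ : 2 ≤ r 1) (hS : Switchable 3 2 1 r S)
    {l : Fin (r 2)} (hl : ∀ p : Idx 3 r, p 2 = l → p ∈ S) (ha : a ∈ S) (p : Idx 3 r)
    (hp : p 2 = a 2) : p ∈ S := by
  by_cases hal : a 2 = l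
  · exact hl p (hp.trans hal)
  have : Nontrivial (Fin (r 0)) := Fin.nontrivial_iff_two_le.2 hr₀
  obtain ⟨x, hx⟩ := exists_ne (a 0)
  have hdist : hammingDist a (Idx3.mk x (a 1) l) = 2 := by
    simp [hammingDist_eq, Idx3.mk, hx.symm, hal]
  have hsw := hS.1 a _ ha (hl _ rfl) hdist 0 one_pos
  exact hS.forall_mem_of_ne hr₀ hr₁ ha hsw rfl (fun h => hx (congrFun h 0).symm) p hp

theorem eq_preimage_image_of_not_injOn (hr₀ : 2 ≤ r 0) (hr₁ : 2 ≤ r 1)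
    (hS : Switchable 3 2 1 r S) (hinj : ¬Set.InjOn (· 2) S) : S = (· 2) ⁻¹' ((· 2) '' S) := by
  obtain ⟨a, ha, b, hb, h2, hab⟩ : ∃ a ∈ S, ∃ b ∈ S, a 2 = b 2 ∧ a ≠ b := by
    simpa [Set.InjOn] using hinj
  refine (Set.subset_preimage_image _ _).antisymm ?_
  rintro p ⟨c, hc, hpc⟩
  have hlayer := hS.forall_mem_of_ne hr₀ hr₁ ha hb h2 hab
  exact hS.forall_mem_of_forall_mem hr₀ hr₁ hlayer hc p hpc.symm

theorem isCornerPoint_of_injOn (hr₀ : 2 ≤ r 0) (hr₁ : 2 ≤ r 1) (hS : Switchable 3 2 t r S)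
    (hinj : Set.InjOn (· 2) S) (ha : a ∈ S) : IsCornerPoint a := by
  by_contra hc
  obtain ⟨b, c, hb2, hc2, hbd, hcd, hbc⟩ := exists_pair_of_not_isCornerPoint hr₀ hr₁ hc
  have hb := hS.mem_of_diagIndex_eq ha hbd.symm hb2.symm
  have hc := hS.mem_of_diagIndex_eq ha hcd.symm hc2.symm
  rw [hinj hb hc (hb2.trans hc2.symm)] at hbc
  omega

end Switchable

theorem switchable_of_isCornerPoint_of_injOn {r : Fin 3 → ℕ} {S : Set (Idx 3 r)} (hr₀ : 2 ≤ r 0)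
    (hr₁ : 2 ≤ r 1) (t : ℕ) (hc : ∀ a ∈ S, Idx3.IsCornerPoint a) (hinj : Set.InjOn (· 2) S) :
    Switchable 3 2 t r S := by
  refine ⟨fun a b ha hb hd _ _ => ?_, fun a b ha hab => ?_⟩
  · have h2 : a 2 ≠ b 2 := fun h => by simp [hinj ha hb h] at hd
    have h01 := (hc a ha).val_zero_eq_iff hr₀ hr₁ (hc b hb)
    rw [Idx3.hammingDist_eq] at hd
    by_cases h0 : (a 0 : ℕ) = b 0
    · simp [Fin.ext_iff, h0, h01.1 h0, h2] at hd
    · simp [Fin.ext_iff, h0, mt h01.2 h0, h2] at hd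
  · obtain ⟨hd, h2⟩ := (Idx3.sEquiv_iff a b).1 hab
    rwa [← (hc a ha).eq_of_diagIndex_eq hd h2]

theorem switchable_classification_n_three_general (t : ℕ) (r : Fin 3 → ℕ)
    (ht1 : 1 ≤ t) (hr : ∀ i, 2 ≤ r i)
    (S : Set (Idx 3 r)) :
    Switchable 3 2 t r S ↔
      ((∃ B : Set (Fin (r 2)), S = {a : Idx 3 r | a 2 ∈ B}) ∨
        ((∀ a ∈ S, ((a 0 : ℕ) = 0 ∧ (a 1 : ℕ) = 0) ∨
            ((a 0 : ℕ) = r 0 - 1 ∧ (a 1 : ℕ) = r 1 - 1)) ∧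
          (∀ a ∈ S, ∀ b ∈ S, a 2 = b 2 → a = b))) := by
  constructor
  · intro hS
    by_cases hinj : Set.InjOn (· 2) S
    · exact Or.inr ⟨fun a ha => hS.isCornerPoint_of_injOn (hr 0) (hr 1) hinj ha, hinj⟩
    · exact Or.inl ⟨_, (hS.mono ht1).eq_preimage_image_of_not_injOn (hr 0) (hr 1) hinj⟩
  · rintro (⟨B, rfl⟩ | ⟨hc, hinj⟩)
    · exact switchable_setOf_apply_mem t 2 le_rfl B
    · exact switchable_of_isCornerPoint_of_injOn (hr 0) (hr 1) t hc hinj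

/-- for `n = 3`, the `(2,t)`-switchable subsets of
`N = [r 1] × [r 2] × [r 3]` are exactly (1) the cylinders `[r 1] × [r 2] × B`, and
(2) the sets having at most one element over each value of the third component, each such
element having its first two components `(1,1)` or `(r 1, r 2)`. -/
theorem switchable_classification_n_three (t : ℕ) (r : Fin 3 → ℕ)
    (ht1 : 1 ≤ t) (ht3 : t ≤ 3) (hr : ∀ i, 2 ≤ r i)
    (S : Set (Idx 3 r)) :
    Switchable 3 2 t r S ↔
      ((∃ B : Set (Fin (r 2)), S = {a : Idx 3 r | a 2 ∈ B}) ∨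
        ((∀ a ∈ S, ((a 0 : ℕ) = 0 ∧ (a 1 : ℕ) = 0) ∨
            ((a 0 : ℕ) = r 0 - 1 ∧ (a 1 : ℕ) = r 1 - 1)) ∧
          (∀ a ∈ S, ∀ b ∈ S, a 2 = b 2 → a = b))) :=
  switchable_classification_n_three_general t r ht1 hr S
end

section
/- Let a, b ∈ N with ‖a‖_s − ‖b‖_s = 2 where ‖a‖_s = Σ_{i=1}^n a_i (case s = n). Then there exist a', b' ∈ N that are n-equivalent to a, b respectively, with a'_1 − b'_1 = 1, a'_2 − b'_2 = 1, and a'_i = b'_i for i ≥ 3. -/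
open Finset

/-!
Put `δ i = 1` for the first two coordinates and `δ i = 0` otherwise, so that `∑ δ = 2`. Since
`a_i ≤ r_i - 1` for all `i`, the bound `∑ b + 2 = ∑ a ≤ ∑ (r_i - 1)` lets us distribute the
total `∑ b` over coordinates `x_i ≤ r_i - 1 - δ_i`. Then `b' = x` and `a' = x + δ` work, since
`n`-equivalence only asks for equal coordinate sums.
-/

lemma Finset.exists_le_sum_eq {ι : Type*} [DecidableEq ι] (s : Finset ι) (c : ι → ℕ) {m : ℕ}
    (hm : m ≤ ∑ i ∈ s, c i) : ∃ x : ι → ℕ, (∀ i, x i ≤ c i) ∧ ∑ i ∈ s, x i = m := by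
  induction s using Finset.induction_on generalizing m with
  | empty => exact ⟨0, fun _ => Nat.zero_le _, by simp at hm ⊢; omega⟩
  | @insert j s hj ih =>
    rw [sum_insert hj] at hm
    obtain ⟨x, hxc, hsum⟩ := ih (m := m - min m (c j)) (by omega)
    refine ⟨Function.update x j (min m (c j)), fun i => ?_, ?_⟩
    · rcases eq_or_ne i j with rfl | hi
      · simp
      · simpa [hi] using hxc i
    · rw [sum_insert hj, Function.update_self,
        sum_congr rfl fun i hi => Function.update_of_ne (ne_of_mem_of_not_mem hi hj) _ _, hsum]
      omega

lemma Finset.exists_add_le_sum_eq {ι : Type*} [Fintype ι] [DecidableEq ι] {c d : ι → ℕ}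
    (hdc : d ≤ c) {m : ℕ} (hm : m + ∑ i, d i ≤ ∑ i, c i) :
    ∃ x : ι → ℕ, (∀ i, x i + d i ≤ c i) ∧ ∑ i, x i = m := by
  have hsub : m ≤ ∑ i, (c i - d i) := by
    rw [sum_tsub_distrib _ fun i _ => hdc i]
    omega
  obtain ⟨x, hxcd, hsum⟩ := exists_le_sum_eq univ (fun i => c i - d i) hsub
  exact ⟨x, fun i => Nat.add_le_of_le_sub (hdc i) (hxcd i), hsum⟩

lemma sEquiv_self_iff_sum_eq {n : ℕ} {r : Fin n → ℕ} {a b : Idx n r} :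
    sEquiv n n r a b ↔ ∑ i, (a i : ℕ) = ∑ i, (b i : ℕ) := by
  simp [sEquiv, Fin.is_lt]

lemma Idx.sum_le {n : ℕ} {r : Fin n → ℕ} (a : Idx n r) : ∑ i, (a i : ℕ) ≤ ∑ i, (r i - 1) :=
  sum_le_sum fun i _ => Nat.le_sub_one_of_lt (a i).is_lt

lemma sum_ite_val_lt_two {n : ℕ} (hn : 2 ≤ n) :
    ∑ i : Fin n, (if (i : ℕ) < 2 then 1 else 0) = 2 := by
  rw [sum_boole, Fin.card_filter_val_lt]
  simpa using hn

/-- if `‖a‖ − ‖b‖ = 2` (sums of all components, case `s = n`), then there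
exist `a', b'` that are `n`-equivalent to `a, b` respectively, with
`a' 1 − b' 1 = 1`, `a' 2 − b' 2 = 1` and `a' i = b' i` for `i ≥ 3`. -/
theorem exists_nEquiv_reps_differing_in_first_two (n : ℕ) (r : Fin n → ℕ)
    (hn : 2 ≤ n) (hr : ∀ i, 2 ≤ r i) (a b : Idx n r)
    (h : (∑ i, (a i : ℕ)) = (∑ i, (b i : ℕ)) + 2) :
    ∃ a' b' : Idx n r, sEquiv n n r a a' ∧ sEquiv n n r b b' ∧
      (a' ⟨0, by omega⟩ : ℕ) = (b' ⟨0, by omega⟩ : ℕ) + 1 ∧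
      (a' ⟨1, by omega⟩ : ℕ) = (b' ⟨1, by omega⟩ : ℕ) + 1 ∧
      ∀ i : Fin n, 2 ≤ (i : ℕ) → a' i = b' i := by
  set δ : Fin n → ℕ := fun i => if (i : ℕ) < 2 then 1 else 0
  have hδsum : ∑ i, δ i = 2 := sum_ite_val_lt_two hn
  have hδ : δ ≤ fun i => r i - 1 := fun i => by have := hr i; dsimp only [δ]; split <;> omega
  obtain ⟨x, hx, hsum⟩ := Finset.exists_add_le_sum_eq hδ (m := ∑ i, (b i : ℕ))
    (by rw [hδsum, ← h]; exact a.sum_le)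
  have hlt : ∀ i, x i + δ i < r i := fun i => by have := hr i; have := hx i; omega
  refine ⟨fun i => ⟨x i + δ i, hlt i⟩, fun i => ⟨x i, by have := hlt i; omega⟩,
    sEquiv_self_iff_sum_eq.2 ?_, sEquiv_self_iff_sum_eq.2 hsum.symm, by simp [δ], by simp [δ],
    fun i hi => by ext; simp [δ]; omega⟩
  simp only [sum_add_distrib, hsum, hδsum, h]
end

section
/- Let p denote the product of all distinct variables of R. Then Ĩ(s,t) = I(s,t) : p = I(s,t) : p^∞, where I(s,t) is generated by the slice minors f_{i,a,b} with d(a,b) = 2 and i ∈ [t], and Ĩ(s,t) is generated by all generalized minors f_{i,a,b} with i ∈ [t]. Moreover Ĩ(s,t) is the smallest prime ideal containing I(s,t) that contains no monomials. -/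
open Finset

/-- The setoid of `s`-equivalence on the set of indices. -/
def sSetoid (n s : ℕ) (r : Fin n → ℕ) : Setoid (Idx n r) where
  r := sEquiv n s r
  iseqv := ⟨fun _ => ⟨rfl, fun _ _ => rfl⟩,
    fun h => ⟨h.1.symm, fun i hi => (h.2 i hi).symm⟩,
    fun h g => ⟨h.1.trans g.1, fun i hi => (h.2 i hi).trans (g.2 i hi)⟩⟩

/-- The variables of the ring `R` are indexed by `s`-equivalence classes of indices,
i.e. `x a = x b` iff `a` and `b` are `s`-equivalent. -/
abbrev IQ (n s : ℕ) (r : Fin n → ℕ) := Quotient (sSetoid n s r)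

/-- The variable `x_a` of the polynomial ring `R = k[x_a : a ∈ N]`. -/
noncomputable def xvar (k : Type) [CommRing k] {n : ℕ} (s : ℕ) {r : Fin n → ℕ}
    (a : Idx n r) : MvPolynomial (IQ n s r) k :=
  MvPolynomial.X (Quotient.mk (sSetoid n s r) a)

/-- The generalized `2 × 2` minor `f_{i,a,b} = x_a x_b − x_{sw(i,a,b)} x_{sw(i,b,a)}`. -/
noncomputable def gminor (k : Type) [CommRing k] {n : ℕ} (s : ℕ) {r : Fin n → ℕ}
    (i : Fin n) (a b : Idx n r) : MvPolynomial (IQ n s r) k :=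
  xvar k s a * xvar k s b - xvar k s (sw i a b) * xvar k s (sw i b a)

/-- The ideal `I(s,t)`, generated by the slice minors `f_{i,a,b}` with `d(a,b) = 2`
and `i ∈ [t]`. -/
noncomputable def ISlice (k : Type) [CommRing k] {n : ℕ} (s t : ℕ) (r : Fin n → ℕ) :
    Ideal (MvPolynomial (IQ n s r) k) :=
  Ideal.span {f | ∃ i : Fin n, ∃ a b : Idx n r,
    (i : ℕ) < t ∧ hammingDist a b = 2 ∧ f = gminor k s i a b}

/-- The ideal `Ĩ(s,t)`, generated by all generalized minors `f_{i,a,b}` with `i ∈ [t]`. -/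
noncomputable def ITilde (k : Type) [CommRing k] {n : ℕ} (s t : ℕ) (r : Fin n → ℕ) :
    Ideal (MvPolynomial (IQ n s r) k) :=
  Ideal.span {f | ∃ i : Fin n, ∃ a b : Idx n r, (i : ℕ) < t ∧ f = gminor k s i a b}

/-- The ideal `Ĩ(s,t)_S`, generated by the generalized minors `f_{i,a,b}` with `i ∈ [t]`
and `a, b` connected in `S`. -/
noncomputable def ITildeS (k : Type) [CommRing k] {n : ℕ} (s t : ℕ) {r : Fin n → ℕ}
    (S : Set (Idx n r)) : Ideal (MvPolynomial (IQ n s r) k) :=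
  Ideal.span {f | ∃ i : Fin n, ∃ a b : Idx n r,
    (i : ℕ) < t ∧ ConnectedIn S a b ∧ f = gminor k s i a b}

noncomputable instance (n s : ℕ) (r : Fin n → ℕ) : Fintype (IQ n s r) :=
  Fintype.ofFinite _

/-!
The heart of the matter is that `p * f_{i,a,b} ∈ I(s,t)` for every generalized minor. Let `q_a`
be the product of the variables other than `x_a`; we show `q_a * f_{i,a,b} ∈ I(s,t)` by induction
on `d(a,b)`. If `a` and `b` differ at some `j ≠ i`, then `a' = sw(j,a,b)` is one step closer to
`b` and `x_{a'} ≠ x_a`, and the identity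
`x_{a'} f_{i,a,b} = x_a f_{i,a',b} + x_{sw(i,b,a)} f_{i,a,sw(i,a',b)}`,
whose last minor is a slice minor, reduces the claim for `(a,b)` to the one for `(a',b)`.
Hence `Ĩ(s,t) ⊆ I(s,t) : p`. Conversely, `p` is a product of variables, so it lies in no prime
ideal without monomials, and for such a prime `P ⊇ I(s,t)` we get `I(s,t) : p ⊆ P`; applied to
`P = Ĩ(s,t)` (which contains no monomial, as its generators vanish at the all-ones point) this
gives the equalities, and applied to arbitrary `P` the minimality.
-/

theorem Ideal.colon_span_singleton_le_of_isPrime {R : Type*} [CommRing R] {I Q : Ideal R} {p : R}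
    (hQ : Q.IsPrime) (hIQ : I ≤ Q) (hp : p ∉ Q) : I.colon (Ideal.span {p}) ≤ Q :=
  fun _ hg => (hQ.mem_or_mem (hIQ (Ideal.mem_colon_span_singleton.1 hg))).resolve_right hp

open MvPolynomial

theorem MvPolynomial.prod_X_notMem_of_isPrime {σ R : Type*} [Fintype σ] [CommRing R]
    {P : Ideal (MvPolynomial σ R)} (hP : P.IsPrime) (hP₀ : ∀ u, monomial u (1 : R) ∉ P) :
    ∏ v, (X v : MvPolynomial σ R) ∉ P := by
  rw [hP.prod_mem_iff]
  rintro ⟨v, -, hv⟩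
  exact hP₀ _ hv

section Switch

variable {n : ℕ} {r : Fin n → ℕ}

theorem sw_eq_left_of_eq {i : Fin n} {a b : Idx n r} (h : a i = b i) : sw i a b = a := by
  funext j
  by_cases hj : j = i
  · subst hj; simp [sw, h]
  · simp [sw, hj]

theorem sw_eq_right_of_forall_ne {i : Fin n} {a b : Idx n r} (h : ∀ j ≠ i, a j = b j) :
    sw i a b = b := by
  funext j
  by_cases hj : j = i
  · simp [sw, hj]
  · simp [sw, hj, h j hj]

theorem hammingDist_sw_lt {j : Fin n} {a b : Idx n r} (h : a j ≠ b j) :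
    hammingDist (sw j a b) b < hammingDist a b := by
  refine Finset.card_lt_card (Finset.ssubset_iff_of_subset ?_ |>.2 ⟨j, by simp [h], by simp [sw]⟩)
  intro x
  by_cases hx : x = j <;> simp [sw, hx]

theorem hammingDist_sw_sw {i j : Fin n} {a b : Idx n r} (hij : i ≠ j) (hi : a i ≠ b i)
    (hj : a j ≠ b j) : hammingDist a (sw i (sw j a b) b) = 2 := by
  have hdiff : (univ.filter fun x => a x ≠ sw i (sw j a b) b x) = {i, j} := by
    ext x
    rw [Finset.mem_filter]
    by_cases hxi : x = i
    · subst hxi; simp [sw, hi]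
    · by_cases hxj : x = j
      · subst hxj; simp [sw, hxi, hj]
      · simp [sw, hxi, hxj]
  rw [hammingDist, hdiff, Finset.card_pair hij]

theorem not_sEquiv_sw {s : ℕ} {j : Fin n} {a b : Idx n r} (h : a j ≠ b j) :
    ¬ sEquiv n s r (sw j a b) a := by
  rintro ⟨hsum, hrest⟩
  rcases le_or_gt s j with hsj | hsj
  · exact h (by simpa [sw] using (hrest j hsj).symm)
  · have hj : j ∈ univ.filter (fun x : Fin n => (x : ℕ) < s) := by simp [hsj]
    have hrest_sum : ∑ x ∈ (univ.filter fun x : Fin n => (x : ℕ) < s).erase j, (sw j a b x : ℕ) =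
        ∑ x ∈ (univ.filter fun x : Fin n => (x : ℕ) < s).erase j, (a x : ℕ) :=
      Finset.sum_congr rfl fun x hx => by simp [sw, Finset.ne_of_mem_erase hx]
    rw [← Finset.add_sum_erase _ _ hj, ← Finset.add_sum_erase _ (fun x => (a x : ℕ)) hj,
      hrest_sum, add_left_inj] at hsum
    exact h (Fin.ext (by simpa [sw] using hsum.symm))

end Switch

section Minors

variable {k : Type} [CommRing k] {n s t : ℕ} {r : Fin n → ℕ}

theorem gminor_eq_zero_of_eq {i : Fin n} {a b : Idx n r} (h : a i = b i) :
    gminor k s i a b = 0 := by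
  rw [gminor, sw_eq_left_of_eq h, sw_eq_left_of_eq h.symm, sub_self]

theorem gminor_eq_zero_of_forall_ne {i : Fin n} {a b : Idx n r} (h : ∀ j ≠ i, a j = b j) :
    gminor k s i a b = 0 := by
  rw [gminor, sw_eq_right_of_forall_ne h, sw_eq_right_of_forall_ne fun j hj => (h j hj).symm,
    mul_comm, sub_self]

theorem xvar_sw_mul_gminor {i j : Fin n} (hij : i ≠ j) (a b : Idx n r) :
    xvar k s (sw j a b) * gminor k s i a b =
      xvar k s a * gminor k s i (sw j a b) b +
        xvar k s (sw i b a) * gminor k s i a (sw i (sw j a b) b) := by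
  have h₁ : sw i b (sw j a b) = sw i b a := by
    funext x; by_cases hx : x = i <;> simp [sw, hx, hij]
  have h₂ : sw i a (sw i (sw j a b) b) = sw i a b := by
    funext x; by_cases hx : x = i <;> simp [sw, hx]
  have h₃ : sw i (sw i (sw j a b) b) a = sw j a b := by
    funext x; by_cases hx : x = i <;> simp [sw, hx, hij]
  simp only [gminor, h₁, h₂, h₃]
  ring

theorem prod_erase_mul_gminor_mem_ISlice [DecidableEq (IQ n s r)] {i : Fin n} (hi : (i : ℕ) < t)
    (a b : Idx n r) :
    (∏ v ∈ univ.erase (Quotient.mk _ a), X v) * gminor k s i a b ∈ ISlice k s t r := by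
  induction h : hammingDist a b using Nat.strong_induction_on generalizing a b with
  | _ d ih =>
  by_cases hab : a i = b i
  · simp [gminor_eq_zero_of_eq hab]
  by_cases hj : ∀ j ≠ i, a j = b j
  · simp [gminor_eq_zero_of_forall_ne hj]
  push Not at hj
  obtain ⟨j, hji, hj⟩ := hj
  have hid := xvar_sw_mul_gminor (k := k) (s := s) (Ne.symm hji) a b
  set a' := sw j a b
  have hne : Quotient.mk (sSetoid n s r) a' ≠ Quotient.mk _ a :=
    fun h => not_sEquiv_sw hj (Quotient.exact h)
  set Q := ∏ v ∈ (univ.erase (Quotient.mk (sSetoid n s r) a)).erase (Quotient.mk _ a'),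
    (X v : MvPolynomial (IQ n s r) k) with hQ
  have hQa : ∏ v ∈ univ.erase (Quotient.mk _ a), X v = xvar k s a' * Q :=
    (Finset.mul_prod_erase _ _ (Finset.mem_erase.2 ⟨hne, mem_univ _⟩)).symm
  have hQa' : ∏ v ∈ univ.erase (Quotient.mk _ a'), X v = xvar k s a * Q := by
    rw [hQ, Finset.erase_right_comm]
    exact (Finset.mul_prod_erase _ _ (Finset.mem_erase.2 ⟨hne.symm, mem_univ _⟩)).symm
  have hstep : (∏ v ∈ univ.erase (Quotient.mk _ a'), X v) * gminor k s i a' b ∈ ISlice k s t r :=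
    ih _ (h ▸ hammingDist_sw_lt hj) a' b rfl
  have hslice : gminor k s i a (sw i a' b) ∈ ISlice k s t r :=
    Ideal.subset_span ⟨i, a, _, hi, hammingDist_sw_sw (Ne.symm hji) hab hj, rfl⟩
  have hsplit : (∏ v ∈ univ.erase (Quotient.mk _ a), X v) * gminor k s i a b =
      (∏ v ∈ univ.erase (Quotient.mk _ a'), X v) * gminor k s i a' b +
        Q * xvar k s (sw i b a) * gminor k s i a (sw i a' b) := by
    rw [hQa, hQa']
    linear_combination Q * hid
  rw [hsplit]
  exact add_mem hstep (Ideal.mul_mem_left _ _ hslice)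

end Minors

section Colon

variable {k : Type} [CommRing k] {n s t : ℕ} {r : Fin n → ℕ}

theorem ITilde_le_colon_prod_X :
    ITilde k s t r ≤
      (ISlice k s t r).colon (Ideal.span {∏ v, (X v : MvPolynomial (IQ n s r) k)}) := by
  classical
  rw [ITilde, Ideal.span_le]
  rintro _ ⟨i, a, b, hi, rfl⟩
  rw [SetLike.mem_coe, Ideal.mem_colon_span_singleton,
    ← Finset.mul_prod_erase _ _ (mem_univ (Quotient.mk _ a)), mul_comm, mul_assoc]
  exact Ideal.mul_mem_left _ _ (prod_erase_mul_gminor_mem_ISlice hi a b)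

theorem ISlice_le_ITilde : ISlice k s t r ≤ ITilde k s t r :=
  Ideal.span_mono fun _ ⟨i, a, b, hi, _, hf⟩ => ⟨i, a, b, hi, hf⟩

theorem ITilde_le_ker_eval_one :
    ITilde k s t r ≤ RingHom.ker (eval fun _ : IQ n s r => (1 : k)) := by
  rw [ITilde, Ideal.span_le]
  rintro _ ⟨i, a, b, -, rfl⟩
  simp [gminor, xvar]

theorem monomial_one_notMem_ITilde [Nontrivial k] (u : IQ n s r →₀ ℕ) :
    monomial u (1 : k) ∉ ITilde k s t r := fun hu => by
  simpa [eval_monomial, Finsupp.prod] using ITilde_le_ker_eval_one hu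

end Colon

theorem ITilde_eq_colon_general (k : Type) [Field k] (n s t : ℕ) (r : Fin n → ℕ)
    (hprime : (ITilde k s t r).IsPrime)
    (p : MvPolynomial (IQ n s r) k) (hp : p = ∏ v : IQ n s r, MvPolynomial.X v) :
    ITilde k s t r = (ISlice k s t r).colon (Ideal.span {p}) ∧
    (∀ g, g ∈ ITilde k s t r ↔ ∃ m : ℕ, p ^ m * g ∈ ISlice k s t r) ∧
    ISlice k s t r ≤ ITilde k s t r ∧
    (∀ u : IQ n s r →₀ ℕ, MvPolynomial.monomial u (1 : k) ∉ ITilde k s t r) ∧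
    (∀ P : Ideal (MvPolynomial (IQ n s r) k), P.IsPrime → ISlice k s t r ≤ P →
      (∀ u : IQ n s r →₀ ℕ, MvPolynomial.monomial u (1 : k) ∉ P) →
      ITilde k s t r ≤ P) := by
  subst hp
  have hp := prod_X_notMem_of_isPrime hprime monomial_one_notMem_ITilde
  have hle := ITilde_le_colon_prod_X (k := k) (s := s) (t := t) (r := r)
  refine ⟨le_antisymm hle (Ideal.colon_span_singleton_le_of_isPrime hprime ISlice_le_ITilde hp),
    fun g => ⟨fun hg => ⟨1, ?_⟩, fun ⟨m, hm⟩ => ?_⟩, ISlice_le_ITilde, monomial_one_notMem_ITilde,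
    fun P hP hIP hP₀ => hle.trans
      (Ideal.colon_span_singleton_le_of_isPrime hP hIP (prod_X_notMem_of_isPrime hP hP₀))⟩
  · rw [pow_one, mul_comm]
    exact Ideal.mem_colon_span_singleton.1 (hle hg)
  · exact (hprime.mem_or_mem (ISlice_le_ITilde hm)).resolve_left (mt (hprime.mem_of_pow_mem m) hp)

/-- with `p` the product of all the distinct variables of `R`, we have
`Ĩ(s,t) = I(s,t) : p = I(s,t) : p^∞`; moreover `Ĩ(s,t)` is the smallest prime ideal
containing `I(s,t)` and containing no monomials. -/
theorem ITilde_eq_colon (k : Type) [Field k] (n s t : ℕ) (r : Fin n → ℕ)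
    (hr : ∀ i, 2 ≤ r i) (hs1 : 1 ≤ s) (hsn : s ≤ n) (ht1 : 1 ≤ t) (htn : t ≤ n)
    (hprime : (ITilde k s t r).IsPrime)
    (p : MvPolynomial (IQ n s r) k) (hp : p = ∏ v : IQ n s r, MvPolynomial.X v) :
    ITilde k s t r = (ISlice k s t r).colon (Ideal.span {p}) ∧
    (∀ g, g ∈ ITilde k s t r ↔ ∃ m : ℕ, p ^ m * g ∈ ISlice k s t r) ∧
    ISlice k s t r ≤ ITilde k s t r ∧
    (∀ u : IQ n s r →₀ ℕ, MvPolynomial.monomial u (1 : k) ∉ ITilde k s t r) ∧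
    (∀ P : Ideal (MvPolynomial (IQ n s r) k), P.IsPrime → ISlice k s t r ≤ P →
      (∀ u : IQ n s r →₀ ℕ, MvPolynomial.monomial u (1 : k) ∉ P) →
      ITilde k s t r ≤ P) :=
  ITilde_eq_colon_general k n s t r hprime p hp
end
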